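/- arXiv:cond-mat/0201091 — 2 statements merged into one kernel-verified Lean document; each statement's English description precedes it below -/
import Mathlib

section
/- For every natural number N ≥ 1 and every real λ₀ with 0 ≤ λ₀ < 1, the quantity (1/(2N))·ln( 2^{-2N} · Σ_{σ,σ' ∈ {−1,1}^N} exp( (λ₀ N / 2)·q(σ,σ')² ) ) is at most (1/(4N))·ln(1/(1−λ₀)), where q(σ,σ') = (1/N)·Σᵢ σᵢ σ'ᵢ. -/
/-!
Hubbard–Stratonovich linearisation: with `S = ∑ i, σ i * σ' i`, the weight
`exp (λ₀ S² / (2N))` is a Gaussian integral of `exp (x S)` over `x`. For fixed `x` the sum over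
`(σ, σ')` factorises into `(4 cosh x) ^ N ≤ 4 ^ N * exp (N x² / 2)`, and integrating this bound
against the Gaussian weight leaves `(1 - λ₀) ^ (-1/2)`.
-/

/-- Spin value of a Boolean configuration entry. -/
def spin (b : Bool) : ℝ := if b then 1 else -1

/-- Overlap of two spin configurations. -/
noncomputable def overlap (N : ℕ) (σ σ' : Fin N → Bool) : ℝ :=
    (1 / (N : ℝ)) * ∑ i, spin (σ i) * spin (σ' i)

open MeasureTheory Real

theorem integral_exp_neg_mul_sq_add_mul {b : ℝ} (hb : 0 < b) (c : ℝ) :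
    ∫ x : ℝ, exp (-b * x ^ 2 + c * x) = √(π / b) * exp (c ^ 2 / (4 * b)) := by
  have hsq (x : ℝ) : -b * x ^ 2 + c * x = -b * (x - c / (2 * b)) ^ 2 + c ^ 2 / (4 * b) := by
    field_simp; ring
  simp_rw [hsq, exp_add]
  rw [integral_mul_const, integral_sub_right_eq_self (fun x ↦ exp (-b * x ^ 2)),
    integral_gaussian]

theorem integrable_exp_neg_mul_sq_add_mul {b : ℝ} (hb : 0 < b) (c : ℝ) :
    Integrable fun x : ℝ ↦ exp (-b * x ^ 2 + c * x) :=
  .of_integral_ne_zero <| by rw [integral_exp_neg_mul_sq_add_mul hb]; positivity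

theorem exp_sq_div_eq_integral {b : ℝ} (hb : 0 < b) (c : ℝ) :
    exp (c ^ 2 / (4 * b)) = (√(π / b))⁻¹ * ∫ x : ℝ, exp (-b * x ^ 2 + c * x) := by
  rw [integral_exp_neg_mul_sq_add_mul hb, inv_mul_cancel_left₀ (by positivity)]

theorem sum_exp_sq_le_of_sum_exp_mul_le {P : Type*} [Fintype P] (S : P → ℝ) {M v : ℝ}
    (hv : 0 < v) (hmgf : ∀ x, ∑ p, exp (x * S p) ≤ M * exp (v * x ^ 2 / 2)) {t : ℝ}
    (ht₀ : 0 ≤ t) (ht₁ : t < 1) :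
    ∑ p, exp (t * S p ^ 2 / (2 * v)) ≤ M * √(1 / (1 - t)) := by
  rcases ht₀.eq_or_lt with rfl | ht
  · simpa using hmgf 0
  set b := v / (2 * t) with hb_def
  have hb : 0 < b := by positivity
  have hvb : v / 2 = b * t := by rw [hb_def]; field_simp
  have hb_one_sub : 0 < b * (1 - t) := mul_pos hb (by linarith)
  have hpt (x : ℝ) :
      exp (-b * x ^ 2) * ∑ p, exp (x * S p) ≤ M * exp (-(b * (1 - t)) * x ^ 2) :=
    calc exp (-b * x ^ 2) * ∑ p, exp (x * S p)
        ≤ exp (-b * x ^ 2) * (M * exp (v * x ^ 2 / 2)) := by gcongr; exact hmgf x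
      _ = M * exp (-(b * (1 - t)) * x ^ 2) := by
          rw [mul_left_comm, ← exp_add, mul_div_right_comm, hvb]; ring_nf
  calc ∑ p, exp (t * S p ^ 2 / (2 * v))
      = (√(π / b))⁻¹ * ∫ x : ℝ, exp (-b * x ^ 2) * ∑ p, exp (x * S p) := by
        have hexp (p : P) : t * S p ^ 2 / (2 * v) = S p ^ 2 / (4 * b) := by
          rw [hb_def]; field_simp; ring
        simp_rw [hexp, exp_sq_div_eq_integral hb, ← Finset.mul_sum]
        rw [← integral_finsetSum _ fun p _ ↦ integrable_exp_neg_mul_sq_add_mul hb (S p)]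
        simp_rw [Finset.mul_sum, ← exp_add, mul_comm (S _)]
    _ ≤ (√(π / b))⁻¹ * ∫ x : ℝ, M * exp (-(b * (1 - t)) * x ^ 2) := by
        refine mul_le_mul_of_nonneg_left ?_ (by positivity)
        exact integral_mono_of_nonneg (.of_forall fun x ↦ by positivity)
          ((integrable_exp_neg_mul_sq hb_one_sub).const_mul M) (.of_forall hpt)
    _ = M * √(1 / (1 - t)) := by
        rw [integral_const_mul, integral_gaussian, div_mul_eq_div_div, div_eq_mul_one_div (π / b),
          sqrt_mul (by positivity), mul_left_comm M,
          inv_mul_cancel_left₀ (by positivity)]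

theorem sum_prod_apply_pair {ι α β R : Type*} [Fintype ι] [DecidableEq ι] [Fintype α]
    [Fintype β] [CommSemiring R] (f : α → β → R) :
    ∑ p : (ι → α) × (ι → β), ∏ i, f (p.1 i) (p.2 i) =
      (∑ a, ∑ b, f a b) ^ Fintype.card ι := by
  rw [Fintype.sum_prod_type]
  simp_rw [← Fintype.prod_sum]
  rw [← Fintype.prod_sum fun (_ : ι) a ↦ ∑ b, f a b, Finset.prod_const, Finset.card_univ]

theorem sum_sum_exp_mul_spin_mul_spin (x : ℝ) :
    ∑ a, ∑ b, exp (x * (spin a * spin b)) = 4 * cosh x := by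
  simp only [Fintype.sum_bool, spin, if_true, Bool.false_eq_true, if_false, cosh_eq]
  ring_nf

theorem sum_exp_mul_sum_spin_mul_spin_le (N : ℕ) (x : ℝ) :
    ∑ p : (Fin N → Bool) × (Fin N → Bool), exp (x * ∑ i, spin (p.1 i) * spin (p.2 i))
      ≤ 4 ^ N * exp (N * x ^ 2 / 2) := by
  simp_rw [Finset.mul_sum, exp_sum, sum_prod_apply_pair fun a b ↦ exp (x * (spin a * spin b)),
    sum_sum_exp_mul_spin_mul_spin, Fintype.card_fin, mul_pow, mul_div_assoc, exp_nat_mul]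
  gcongr
  exact cosh_le_exp_half_sq x

theorem coupled_free_energy_bound (N : ℕ) (hN : 1 ≤ N) (l0 : ℝ) (h0 : 0 ≤ l0) (h1 : l0 < 1) :
    (1 / (2 * (N : ℝ))) *
      Real.log ((2 : ℝ) ^ (-(2 * (N : ℤ))) *
        ∑ p : (Fin N → Bool) × (Fin N → Bool),
          Real.exp (l0 * N / 2 * (overlap N p.1 p.2) ^ 2))
    ≤ (1 / (4 * (N : ℝ))) * Real.log (1 / (1 - l0)) := by
  have hNpos : (0 : ℝ) < N := by exact_mod_cast hN
  have hexponent (p : (Fin N → Bool) × (Fin N → Bool)) : l0 * N / 2 * overlap N p.1 p.2 ^ 2 =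
      l0 * (∑ i, spin (p.1 i) * spin (p.2 i)) ^ 2 / (2 * N) := by
    rw [overlap]; field_simp
  have hsum :=
    sum_exp_sq_le_of_sum_exp_mul_le _ hNpos (sum_exp_mul_sum_spin_mul_spin_le N) h0 h1
  have hnorm : (2 : ℝ) ^ (-(2 * (N : ℤ))) = ((4 : ℝ) ^ N)⁻¹ := by
    rw [zpow_neg, zpow_mul]; norm_num
  have hpos : 0 < (2 : ℝ) ^ (-(2 * (N : ℤ))) *
      ∑ p : (Fin N → Bool) × (Fin N → Bool), exp (l0 * N / 2 * overlap N p.1 p.2 ^ 2) := by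
    positivity
  have hle : (2 : ℝ) ^ (-(2 * (N : ℤ))) *
      ∑ p : (Fin N → Bool) × (Fin N → Bool), exp (l0 * N / 2 * overlap N p.1 p.2 ^ 2)
      ≤ √(1 / (1 - l0)) := by
    rw [hnorm, inv_mul_le_iff₀ (by positivity)]
    simpa only [hexponent] using hsum
  calc _ ≤ (1 / (2 * (N : ℝ))) * log √(1 / (1 - l0)) := by gcongr
    _ = _ := by rw [log_sqrt (by positivity)]; ring
end

section
/- For every N ≥ 1 and λ₀ ≥ 0: 2^{-2N}·Σ_{σ,σ' ∈ {−1,1}^N} exp((λ₀ N/2)·q(σ,σ')²) = ∫_ℝ (cosh(z·√(λ₀/N)))^N dμ(z), where q(σ,σ') = (1/N)Σᵢσᵢσ'ᵢ and μ is the standard Gaussian measure. -/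
open MeasureTheory ProbabilityTheory

lemma integral_exp_mul_gaussianReal_zero_one (t : ℝ) :
    ∫ z, Real.exp (t * z) ∂(gaussianReal 0 1) = Real.exp (t ^ 2 / 2) := by
  simpa [mgf] using congrFun (mgf_fun_id_gaussianReal (μ := 0) (v := 1)) t

lemma Fintype.sum_pair_prod_eq_pow {ι α β M : Type*} [Fintype ι] [DecidableEq ι] [Fintype α]
    [Fintype β] [CommSemiring M] (f : α → β → M) :
    ∑ p : (ι → α) × (ι → β), ∏ i, f (p.1 i) (p.2 i) = (∑ a, ∑ b, f a b) ^ Fintype.card ι := by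
  rw [← Finset.card_univ, ← Finset.prod_const, ← Finset.sum_product', Finset.univ_product_univ,
    Fintype.prod_sum]
  exact (Fintype.sum_equiv (Equiv.arrowProdEquivProdArrow ι (fun _ ↦ α) (fun _ ↦ β)) _ _
    fun _ ↦ rfl).symm

lemma sum_exp_mul_spin_mul_spin (r : ℝ) :
    ∑ a, ∑ b, Real.exp (r * (spin a * spin b)) = 4 * Real.cosh r := by
  simp only [Fintype.sum_bool, spin, Real.cosh_eq, if_true, Bool.false_eq_true, if_false]
  ring_nf

lemma sum_exp_mul_sum_spin_mul_spin {ι : Type*} [Fintype ι] [DecidableEq ι] (r : ℝ) :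
    ∑ p : (ι → Bool) × (ι → Bool), Real.exp (r * ∑ i, spin (p.1 i) * spin (p.2 i))
      = (4 * Real.cosh r) ^ Fintype.card ι := by
  simp_rw [Finset.mul_sum, Real.exp_sum]
  rw [Fintype.sum_pair_prod_eq_pow (fun a b ↦ Real.exp (r * (spin a * spin b))),
    sum_exp_mul_spin_mul_spin]

lemma Real.sqrt_mul_div_self (a : ℝ) {x : ℝ} (hx : 0 ≤ x) : √(a * x) / x = √(a / x) := by
  rw [Real.sqrt_mul' a hx, Real.sqrt_div' a hx, mul_div_assoc, Real.sqrt_div_self', mul_one_div]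

lemma sqrt_mul_mul_overlap (l0 : ℝ) (N : ℕ) (σ σ' : Fin N → Bool) :
    √(l0 * N) * overlap N σ σ' = √(l0 / N) * ∑ i, spin (σ i) * spin (σ' i) := by
  rw [overlap, ← mul_assoc, mul_one_div, Real.sqrt_mul_div_self l0 N.cast_nonneg]

theorem coupled_partition_gaussian_rep_general (N : ℕ) (l0 : ℝ) (h0 : 0 ≤ l0) :
    (2 : ℝ) ^ (-(2 * (N : ℤ))) *
      ∑ p : (Fin N → Bool) × (Fin N → Bool),
        Real.exp (l0 * N / 2 * (overlap N p.1 p.2) ^ 2)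
    = ∫ z : ℝ, (Real.cosh (z * Real.sqrt (l0 / N))) ^ N ∂(gaussianReal 0 1) := by
  have linearize (p : (Fin N → Bool) × (Fin N → Bool)) :
      Real.exp (l0 * N / 2 * (overlap N p.1 p.2) ^ 2)
        = ∫ z, Real.exp (√(l0 / N) * (∑ i, spin (p.1 i) * spin (p.2 i)) * z)
            ∂(gaussianReal 0 1) := by
    rw [integral_exp_mul_gaussianReal_zero_one, ← sqrt_mul_mul_overlap, mul_pow,
      Real.sq_sqrt (by positivity)]
    ring_nf
  have factorize (z : ℝ) :
      ∑ p : (Fin N → Bool) × (Fin N → Bool),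
        Real.exp (√(l0 / N) * (∑ i, spin (p.1 i) * spin (p.2 i)) * z)
        = (4 * Real.cosh (z * √(l0 / N))) ^ N := by
    simpa only [Fintype.card_fin, mul_comm, mul_left_comm, mul_assoc] using
      sum_exp_mul_sum_spin_mul_spin (ι := Fin N) (z * √(l0 / N))
  have hnorm : (2 : ℝ) ^ (-(2 * (N : ℤ))) * 4 ^ N = 1 := by
    rw [zpow_neg, zpow_mul]
    norm_num
  rw [Finset.sum_congr rfl fun p _ ↦ linearize p,
    ← integral_finsetSum _ fun _ _ ↦ integrable_exp_mul_gaussianReal _, ← integral_const_mul]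
  simp_rw [factorize, mul_pow, ← mul_assoc, hnorm, one_mul]

theorem coupled_partition_gaussian_rep (N : ℕ) (hN : 1 ≤ N) (l0 : ℝ) (h0 : 0 ≤ l0) :
    (2 : ℝ) ^ (-(2 * (N : ℤ))) *
      ∑ p : (Fin N → Bool) × (Fin N → Bool),
        Real.exp (l0 * N / 2 * (overlap N p.1 p.2) ^ 2)
    = ∫ z : ℝ, (Real.cosh (z * Real.sqrt (l0 / N))) ^ N ∂(gaussianReal 0 1) :=
  coupled_partition_gaussian_rep_general N l0 h0
end
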